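/- arXiv:1311.5187 — 2 statements merged into one kernel-verified Lean document; each statement's English description precedes it below -/
import Mathlib

section
/- Let β̂_LS and β̂₀ be vectors in R^p, let Ĉ be a symmetric positive definite p×p matrix, σ̂₀ > 0, and δ > 0. Define d(β) = (1/σ̂₀²)(β − β̂₀)'Ĉ(β − β̂₀) and let d₀ = d(β̂_LS). Then the minimizer of ‖X(β̂_LS − β)‖² over {β : d(β) ≤ δ}, where Ĉ = (1/n)X'X with X of full column rank, is β̂ = t β̂_LS + (1−t) β̂₀ with t = min(1, √(δ/d₀)); in particular β̂ lies on the segment joining β̂₀ and β̂_LS. -/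
open Matrix Real

lemma key_dot {n p : ℕ} (X : Matrix (Fin n) (Fin p) ℝ) (w : Fin p → ℝ) :
    w ⬝ᵥ (Xᵀ * X).mulVec w = ∑ i, (X.mulVec w) i ^ 2 := by
  rw [← Matrix.mulVec_mulVec, Matrix.dotProduct_mulVec, Matrix.vecMul_transpose]
  simp [dotProduct, sq]

lemma key_norm {n : ℕ} (x : EuclideanSpace ℝ (Fin n)) : ∑ i, x i ^ 2 = ‖x‖ ^ 2 := by
  have h : ‖x‖ ^ 2 = ∑ i, ‖x i‖ ^ 2 := by
    rw [EuclideanSpace.norm_eq, Real.sq_sqrt (by positivity)]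
  rw [h]
  simp [Real.norm_eq_abs, sq_abs]

/-- The DCML regression estimator: the minimizer of `‖X(β̂_LS − β)‖²` over the
KL-ball `{β : (1/σ̂₀²)(β − β̂₀)'Ĉ(β − β̂₀) ≤ δ}` with `Ĉ = (1/n)X'X` (full column rank)
is `β̂ = t β̂_LS + (1−t) β̂₀` with `t = min(1, √(δ/d₀))`. -/
theorem stmt4 {n p : ℕ} (X : Matrix (Fin n) (Fin p) ℝ)
    (Chat : Matrix (Fin p) (Fin p) ℝ)
    (hrank : X.rank = p)
    (hChat : Chat = ((n : ℝ)⁻¹) • (Xᵀ * X)) (hPD : Chat.PosDef)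
    (βLS β₀ : Fin p → ℝ) (σ₀ δ : ℝ) (hσ₀ : 0 < σ₀) (hδ : 0 < δ)
    (d : (Fin p → ℝ) → ℝ)
    (hd : ∀ β, d β = (1 / σ₀ ^ 2) * ((β - β₀) ⬝ᵥ Chat.mulVec (β - β₀)))
    (t : ℝ) (ht : t = min 1 (Real.sqrt (δ / d βLS)))
    (βhat : Fin p → ℝ) (hβhat : βhat = t • βLS + (1 - t) • β₀) :
    d βhat ≤ δ ∧
      ∀ β : Fin p → ℝ, d β ≤ δ →
        (∑ i, (X.mulVec (βLS - βhat)) i ^ 2) ≤ ∑ i, (X.mulVec (βLS - β)) i ^ 2 := by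
  set c : ℝ := 1 / σ₀ ^ 2 * (n : ℝ)⁻¹ with hc
  have hc0 : 0 ≤ c := by positivity
  have hdgen : ∀ β, d β = c * ∑ i, (X.mulVec (β - β₀)) i ^ 2 := by
    intro β
    rw [hd β, hChat, Matrix.smul_mulVec, dotProduct_smul, key_dot, smul_eq_mul, hc]
    ring
  -- degenerate case n = 0
  rcases Nat.eq_zero_or_pos n with hn | hn
  · subst hn
    constructor
    · rw [hdgen]; simp [hδ.le]
    · intro β _; simp
  have hcpos : 0 < c := by
    have : (0:ℝ) < (n:ℝ) := by exact_mod_cast hn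
    positivity
  set S₀ : ℝ := ∑ i, (X.mulVec (βLS - β₀)) i ^ 2 with hS₀
  have hS₀nn : 0 ≤ S₀ := Finset.sum_nonneg fun i _ => sq_nonneg _
  have ht0 : 0 ≤ t := ht ▸ le_min zero_le_one (Real.sqrt_nonneg _)
  have ht1 : t ≤ 1 := ht ▸ min_le_left _ _
  have hv1 : βhat - β₀ = t • (βLS - β₀) := by
    rw [hβhat]; ext i; simp [Pi.smul_apply]; ring
  have hv2 : βLS - βhat = (1 - t) • (βLS - β₀) := by
    rw [hβhat]; ext i; simp [Pi.smul_apply]; ring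
  have hsmulsum : ∀ (a : ℝ) (w : Fin p → ℝ),
      ∑ i, (X.mulVec (a • w)) i ^ 2 = a ^ 2 * ∑ i, (X.mulVec w) i ^ 2 := by
    intro a w
    rw [Matrix.mulVec_smul, Finset.mul_sum]
    simp [Pi.smul_apply, smul_eq_mul, mul_pow]
  have hd0 : d βLS = c * S₀ := hdgen βLS
  have hdhat : d βhat = t ^ 2 * (c * S₀) := by
    rw [hdgen, hv1, hsmulsum]; ring
  have hobj : ∑ i, (X.mulVec (βLS - βhat)) i ^ 2 = (1 - t) ^ 2 * S₀ := by
    rw [hv2, hsmulsum]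
  constructor
  · by_cases hcase : d βLS ≤ δ
    · rw [hd0] at hcase
      rw [hdhat]
      have htsq : t ^ 2 ≤ 1 := by nlinarith
      calc t ^ 2 * (c * S₀) ≤ 1 * (c * S₀) :=
            mul_le_mul_of_nonneg_right htsq (by positivity)
        _ = c * S₀ := one_mul _
        _ ≤ δ := hcase
    · push_neg at hcase
      have hdpos : 0 < d βLS := hδ.trans hcase
      have htle : Real.sqrt (δ / d βLS) ≤ 1 := by
        rw [show (1:ℝ) = Real.sqrt 1 by simp]
        exact Real.sqrt_le_sqrt (by rw [div_le_one hdpos]; exact hcase.le)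
      have hteq : t = Real.sqrt (δ / d βLS) := by rw [ht, min_eq_right htle]
      have ht2 : t ^ 2 = δ / d βLS := by
        rw [hteq, Real.sq_sqrt (div_nonneg hδ.le hdpos.le)]
      rw [hdhat, ← hd0, ht2, div_mul_cancel₀ _ hdpos.ne']
  · intro β hβ
    rw [hobj]
    by_cases hS : S₀ = 0
    · rw [hS, mul_zero]
      exact Finset.sum_nonneg fun i _ => sq_nonneg _
    have hS₀pos : 0 < S₀ := lt_of_le_of_ne hS₀nn (Ne.symm hS)
    by_cases hcase : d βLS ≤ δ
    · -- t = 1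
      have h1le : (1:ℝ) ≤ Real.sqrt (δ / d βLS) := by
        rw [show (1:ℝ) = Real.sqrt 1 by simp]
        apply Real.sqrt_le_sqrt
        rw [le_div_iff₀ (by rw [hd0]; positivity)]
        linarith
      have hteq : t = 1 := by rw [ht, min_eq_left h1le]
      rw [hteq]
      simp
      exact Finset.sum_nonneg fun i _ => sq_nonneg _
    · push_neg at hcase
      have hdpos : 0 < d βLS := hδ.trans hcase
      have htle : Real.sqrt (δ / d βLS) ≤ 1 := by
        rw [show (1:ℝ) = Real.sqrt 1 by simp]
        exact Real.sqrt_le_sqrt (by rw [div_le_one hdpos]; exact hcase.le)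
      have hteq : t = Real.sqrt (δ / d βLS) := by rw [ht, min_eq_right htle]
      have ht2 : t ^ 2 * (c * S₀) = δ := by
        rw [hteq, Real.sq_sqrt (div_nonneg hδ.le hdpos.le), ← hd0,
          div_mul_cancel₀ _ hdpos.ne']
      -- Euclidean space setup
      set u : EuclideanSpace ℝ (Fin n) := WithLp.toLp 2 (X.mulVec (βLS - β₀)) with hu
      set v : EuclideanSpace ℝ (Fin n) := WithLp.toLp 2 (X.mulVec (β - β₀)) with hv
      have huv : (WithLp.toLp 2 (X.mulVec (βLS - β)) : EuclideanSpace ℝ (Fin n)) = u - v := by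
        rw [hu, hv]
        rw [← WithLp.toLp_sub, ← Matrix.mulVec_sub]
        congr 2
        ext i; simp
      have hSu : S₀ = ‖u‖ ^ 2 := key_norm u
      have hSv : ∑ i, (X.mulVec (β - β₀)) i ^ 2 = ‖v‖ ^ 2 := key_norm v
      have hT : ∑ i, (X.mulVec (βLS - β)) i ^ 2 = ‖u - v‖ ^ 2 := by
        rw [show (∑ i, (X.mulVec (βLS - β)) i ^ 2)
            = ∑ i, ((WithLp.toLp 2 (X.mulVec (βLS - β)) : EuclideanSpace ℝ (Fin n))) i ^ 2 from rfl,
          huv, key_norm]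
      rw [hT, hSu]
      rw [hdgen β, hSv] at hβ
      -- b ≤ t * a
      have ha0 : (0:ℝ) ≤ ‖u‖ := norm_nonneg u
      have hb0 : (0:ℝ) ≤ ‖v‖ := norm_nonneg v
      have hkey : c * (t ^ 2 * S₀) = δ := by rw [← ht2]; ring
      have hbsq : ‖v‖ ^ 2 ≤ t ^ 2 * S₀ :=
        le_of_mul_le_mul_left (by linarith) hcpos
      rw [hSu] at hbsq
      have hba : ‖v‖ ≤ t * ‖u‖ := by
        have h := Real.sqrt_le_sqrt hbsq
        rwa [Real.sqrt_sq hb0, show t ^ 2 * ‖u‖ ^ 2 = (t * ‖u‖) ^ 2 by ring,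
          Real.sqrt_sq (mul_nonneg ht0 ha0)] at h
      have htri : ‖u‖ - ‖v‖ ≤ ‖u - v‖ := norm_sub_norm_le u v
      have h3 : 0 ≤ (1 - t) * ‖u‖ := mul_nonneg (by linarith) ha0
      have h4 : (1 - t) * ‖u‖ ≤ ‖u - v‖ := by
        have he : (1 - t) * ‖u‖ = ‖u‖ - t * ‖u‖ := by ring
        linarith
      have h5 := mul_self_le_mul_self h3 h4
      calc (1 - t) ^ 2 * ‖u‖ ^ 2 = ((1 - t) * ‖u‖) * ((1 - t) * ‖u‖) := by ring
        _ ≤ ‖u - v‖ * ‖u - v‖ := h5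
        _ = ‖u - v‖ ^ 2 := by ring
end

section
/- Let Σ̂ be a symmetric positive definite p×p matrix, Σ̂₀ symmetric positive definite with eigenvalues in [m, M] for constants 0 < m ≤ M, and suppose log|Σ̂| − log|Σ̂₀| + trace(Σ̂⁻¹Σ̂₀) − p ≤ δ for some δ > 0. Then there exist constants 0 < a ≤ b, depending only on m, M, p, δ, such that all eigenvalues of Σ̂ lie in [a, b]. -/
open Matrix Real Set

section Aux

variable {n : Type*} [Fintype n] [DecidableEq n]

lemma aux_psd_diag_nonneg {A : Matrix n n ℝ} (hA : A.PosSemidef) (i : n) :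
    0 ≤ A i i := by
  exact hA.diag_nonneg

lemma aux_trace_mul_nonneg {A B : Matrix n n ℝ} (hA : A.PosSemidef) (hB : B.PosSemidef) :
    0 ≤ (A * B).trace := by
  obtain ⟨C, rfl⟩ : ∃ C : Matrix n n ℝ, B = Cᴴ * C := by
    open scoped MatrixOrder in exact CStarAlgebra.nonneg_iff_eq_star_mul_self.mp hB.nonneg
  have h1 : (A * (Cᴴ * C)).trace = (C * A * Cᴴ).trace := by
    rw [← Matrix.mul_assoc, Matrix.trace_mul_cycle]
  rw [h1, Matrix.trace]
  exact Finset.sum_nonneg fun i _ =>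
    aux_psd_diag_nonneg (hA.mul_mul_conjTranspose_same C) i

/-- The trace of the inverse of a positive definite real matrix is the sum of the
inverses of its eigenvalues. -/
lemma aux_inv_trace {S : Matrix n n ℝ} (hS : S.PosDef) :
    S⁻¹.trace = ∑ i, (hS.1.eigenvalues i)⁻¹ := by
  set U : Matrix n n ℝ := (hS.1.eigenvectorUnitary : Matrix n n ℝ) with hUdef
  have hU1 : U * star U = 1 := (Matrix.mem_unitaryGroup_iff).mp hS.1.eigenvectorUnitary.2
  have hU2 : star U * U = 1 := (Matrix.mem_unitaryGroup_iff').mp hS.1.eigenvectorUnitary.2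
  set D : Matrix n n ℝ := diagonal (RCLike.ofReal ∘ hS.1.eigenvalues) with hDdef
  set D' : Matrix n n ℝ := diagonal (fun i => (hS.1.eigenvalues i)⁻¹) with hD'def
  have hSpec : S = U * D * star U := hS.1.spectral_theorem
  have hDD' : D * D' = 1 := by
    have hfun : (fun i => (RCLike.ofReal ∘ hS.1.eigenvalues) i * (hS.1.eigenvalues i)⁻¹)
        = fun _ => (1:ℝ) := by
      funext i
      simp [Function.comp, mul_inv_cancel₀ (hS.eigenvalues_pos i).ne']
    rw [hDdef, hD'def, diagonal_mul_diagonal, hfun, diagonal_one]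
  have hinv : S⁻¹ = U * D' * star U := by
    apply Matrix.inv_eq_right_inv
    rw [hSpec]
    calc (U * D * star U) * (U * D' * star U)
        = U * (D * ((star U * U) * (D' * star U))) := by
          simp only [Matrix.mul_assoc]
      _ = U * ((D * D') * star U) := by rw [hU2, Matrix.one_mul, Matrix.mul_assoc]
      _ = U * (1 * star U) := by rw [hDD']
      _ = 1 := by rw [Matrix.one_mul, hU1]
  rw [hinv, Matrix.trace_mul_cycle, hU2, Matrix.one_mul, hD'def, Matrix.trace_diagonal]

/-- If all eigenvalues of a positive definite real matrix are at least `m`, then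
`S0 - m • 1` is positive semidefinite. -/
lemma aux_sub_smul_one_posSemidef {S0 : Matrix n n ℝ} (hS0 : S0.PosDef) {m : ℝ}
    (hge : ∀ i, m ≤ hS0.1.eigenvalues i) : (S0 - m • 1).PosSemidef := by
  set V : Matrix n n ℝ := (hS0.1.eigenvectorUnitary : Matrix n n ℝ) with hVdef
  have hV1 : V * star V = 1 := (Matrix.mem_unitaryGroup_iff).mp hS0.1.eigenvectorUnitary.2
  have hSpec : S0 = V * Matrix.diagonal (RCLike.ofReal ∘ hS0.1.eigenvalues) * star V :=
    hS0.1.spectral_theorem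
  have key : S0 - m • 1 = V * Matrix.diagonal (fun i => hS0.1.eigenvalues i - m) * star V := by
    have h2 : V * (m • (1 : Matrix n n ℝ)) * star V = m • (1 : Matrix n n ℝ) := by
      rw [Matrix.mul_smul, Matrix.mul_one, Matrix.smul_mul, hV1]
    have h3 : Matrix.diagonal (fun i => hS0.1.eigenvalues i - m)
        = Matrix.diagonal (RCLike.ofReal ∘ hS0.1.eigenvalues) - m • (1 : Matrix n n ℝ) := by
      rw [Matrix.smul_one_eq_diagonal, diagonal_sub]
      rfl
    rw [h3, Matrix.mul_sub, Matrix.sub_mul, h2, ← hSpec]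
  rw [key]
  exact (PosSemidef.diagonal (fun i => by simpa using hge i)).mul_mul_conjTranspose_same V

/-- The elementary scalar inequality `1 + log m ≤ log x + m / x`. -/
lemma aux_scalar_lower {m x : ℝ} (hm : 0 < m) (hx : 0 < x) :
    1 + Real.log m ≤ Real.log x + m * x⁻¹ := by
  have h := Real.log_le_sub_one_of_pos (show (0:ℝ) < m / x from div_pos hm hx)
  rw [Real.log_div hm.ne' hx.ne'] at h
  have : m / x = m * x⁻¹ := by ring
  linarith [this ▸ h]

/-- From `log x + m * x⁻¹ ≤ C` with `C, m, x > 0` derive eigenvalue bounds. -/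
lemma aux_from_f_bound {m x C : ℝ} (hm : 0 < m) (hx : 0 < x) (hC : 0 < C)
    (h : Real.log x + m * x⁻¹ ≤ C) :
    m ^ 2 / (2 * C * m + 4) ≤ x ∧ x ≤ Real.exp C := by
  constructor
  · set s : ℝ := Real.sqrt x⁻¹ with hsdef
    have hs0 : 0 ≤ s := Real.sqrt_nonneg _
    have hs2 : s ^ 2 = x⁻¹ := Real.sq_sqrt (by positivity)
    have hlogs : Real.log s ≤ s - 1 := Real.log_le_sub_one_of_pos (Real.sqrt_pos.mpr (by positivity))
    have hlog : Real.log x⁻¹ ≤ 2 * s - 2 := by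
      have : Real.log s = Real.log x⁻¹ / 2 := Real.log_sqrt (by positivity)
      linarith
    have hkey : m * s ^ 2 ≤ C + 2 * s := by
      have hlx : Real.log x⁻¹ = - Real.log x := Real.log_inv x
      rw [hs2]
      linarith
    have hquad : m ^ 2 * s ^ 2 ≤ 2 * C * m + 4 := by
      nlinarith [sq_nonneg (m * s - 2), mul_le_mul_of_nonneg_left hkey hm.le]
    have hden : (0:ℝ) < 2 * C * m + 4 := by positivity
    rw [div_le_iff₀ hden]
    calc m ^ 2 = (m ^ 2 * s ^ 2) * x := by
          rw [hs2]; field_simp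
      _ ≤ (2 * C * m + 4) * x := by
          exact mul_le_mul_of_nonneg_right hquad hx.le
      _ = x * (2 * C * m + 4) := by ring
  · have hlx : Real.log x ≤ C := by nlinarith [mul_pos hm (inv_pos.mpr hx)]
    exact (Real.log_le_iff_le_exp hx).mp hlx

end Aux

/-- Eigenvalue bounds for the DCML scatter estimator: if the eigenvalues of `Σ̂₀` lie in
`[m, M]` and `log|Σ̂| − log|Σ̂₀| + tr(Σ̂⁻¹Σ̂₀) − p ≤ δ`, then all eigenvalues of `Σ̂` lie
in an interval `[a, b]` with `0 < a ≤ b` depending only on `m, M, p, δ`. -/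
theorem stmt11 (p : ℕ) (m M δ : ℝ) (hm : 0 < m) (hmM : m ≤ M) (hδ : 0 < δ) :
    ∃ a b : ℝ, 0 < a ∧ a ≤ b ∧
      ∀ (S S0 : Matrix (Fin p) (Fin p) ℝ) (hS : S.PosDef) (hS0 : S0.PosDef),
        (∀ i, hS0.1.eigenvalues i ∈ Icc m M) →
        Real.log S.det - Real.log S0.det + (S⁻¹ * S0).trace - p ≤ δ →
        ∀ i, hS.1.eigenvalues i ∈ Icc a b := by
  set C : ℝ := δ + p + p * |Real.log M| + p * (1 + |Real.log m|) + 1 with hCdef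
  have hC : 0 < C := by
    have h1 : (0:ℝ) ≤ p := Nat.cast_nonneg p
    have h2 : (0:ℝ) ≤ |Real.log M| := abs_nonneg _
    have h3 : (0:ℝ) ≤ |Real.log m| := abs_nonneg _
    nlinarith
  set b : ℝ := Real.exp C with hbdef
  set a0 : ℝ := m ^ 2 / (2 * C * m + 4) with ha0def
  have ha0 : 0 < a0 := by positivity
  have hb : 0 < b := Real.exp_pos _
  refine ⟨min a0 b, b, lt_min ha0 hb, min_le_right _ _, ?_⟩
  intro S S0 hS hS0 hbound hconstr i
  set lam : Fin p → ℝ := hS.1.eigenvalues with hlamdef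
  have hlampos : ∀ j, 0 < lam j := fun j => hS.eigenvalues_pos j
  -- log det S = sum of logs
  have h1 : Real.log S.det = ∑ j, Real.log (lam j) := by
    rw [hS.1.det_eq_prod_eigenvalues]
    simp only [RCLike.ofReal_real_eq_id, id]
    exact Real.log_prod fun j _ => (hlampos j).ne'
  -- log det S0 ≤ p * |log M|
  have h2 : Real.log S0.det ≤ p * |Real.log M| := by
    rw [hS0.1.det_eq_prod_eigenvalues]
    simp only [RCLike.ofReal_real_eq_id, id]
    rw [Real.log_prod fun j _ => (hS0.eigenvalues_pos j).ne']
    calc ∑ j, Real.log (hS0.1.eigenvalues j) ≤ ∑ _j : Fin p, |Real.log M| := by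
          refine Finset.sum_le_sum fun j _ => ?_
          exact le_trans (Real.log_le_log (hS0.eigenvalues_pos j) (hbound j).2)
            (le_abs_self _)
      _ = p * |Real.log M| := by simp [mul_comm]
  -- trace lower bound
  have h3 : m * ∑ j, (lam j)⁻¹ ≤ (S⁻¹ * S0).trace := by
    have hpsd : (S0 - m • 1).PosSemidef :=
      aux_sub_smul_one_posSemidef hS0 (fun j => (hbound j).1)
    have hnn : 0 ≤ (S⁻¹ * (S0 - m • 1)).trace :=
      aux_trace_mul_nonneg hS.inv.posSemidef hpsd
    have hsplit : S⁻¹ * S0 = S⁻¹ * (S0 - m • 1) + m • S⁻¹ := by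
      rw [Matrix.mul_sub, Matrix.mul_smul, Matrix.mul_one]
      abel
    rw [hsplit, Matrix.trace_add, Matrix.trace_smul, aux_inv_trace hS]
    simp only [smul_eq_mul]
    linarith
  -- total sum bound
  have hsum : ∑ j, (Real.log (lam j) + m * (lam j)⁻¹) ≤ δ + p + p * |Real.log M| := by
    rw [Finset.sum_add_distrib, ← Finset.mul_sum]
    have := hconstr
    rw [h1] at this
    linarith
  -- each term is at least 1 + log m
  have hterm : ∀ j, 1 + Real.log m ≤ Real.log (lam j) + m * (lam j)⁻¹ :=
    fun j => aux_scalar_lower hm (hlampos j)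
  -- extract the i-th term bound
  have hp1 : 1 ≤ p := i.pos
  have hi : Real.log (lam i) + m * (lam i)⁻¹ ≤ C := by
    have hrest : ((p:ℝ) - 1) * (1 + Real.log m) ≤
        ∑ j ∈ Finset.univ.erase i, (Real.log (lam j) + m * (lam j)⁻¹) := by
      have hcard : (Finset.univ.erase i).card = p - 1 := by
        simp [Finset.card_erase_of_mem]
      have := Finset.card_nsmul_le_sum (Finset.univ.erase i)
        (fun j => Real.log (lam j) + m * (lam j)⁻¹) (1 + Real.log m)
        (fun j _ => hterm j)
      rw [hcard, nsmul_eq_mul, Nat.cast_sub hp1, Nat.cast_one] at this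
      exact this
    have hsplit := Finset.add_sum_erase Finset.univ
      (fun j => Real.log (lam j) + m * (lam j)⁻¹) (Finset.mem_univ i)
    have hfi : Real.log (lam i) + m * (lam i)⁻¹ ≤
        (δ + p + p * |Real.log M|) - ((p:ℝ) - 1) * (1 + Real.log m) := by
      rw [← hsplit] at hsum
      linarith
    -- arithmetic: the right side is at most C
    have habs1 : -(1 + |Real.log m|) ≤ 1 + Real.log m := by
      have := neg_abs_le (Real.log m)
      linarith
    have hq : (1:ℝ) ≤ (p:ℝ) := by exact_mod_cast hp1
    have : -((p:ℝ) - 1) * (1 + Real.log m) ≤ ((p:ℝ) - 1) * (1 + |Real.log m|) := by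
      rw [neg_mul]
      have h4 : ((p:ℝ) - 1) * (-(1 + |Real.log m|)) ≤ ((p:ℝ) - 1) * (1 + Real.log m) :=
        mul_le_mul_of_nonneg_left habs1 (by linarith)
      linarith [h4]
    have h5 : ((p:ℝ) - 1) * (1 + |Real.log m|) ≤ (p:ℝ) * (1 + |Real.log m|) := by
      have : (0:ℝ) ≤ 1 + |Real.log m| := by positivity
      nlinarith
    rw [hCdef]
    nlinarith [hfi]
  have := aux_from_f_bound hm (hlampos i) hC hi
  exact ⟨le_trans (min_le_left _ _) this.1, this.2⟩
end
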